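/- arXiv:1807.02893 — 2 statements merged into one kernel-verified Lean document; each statement's English description precedes it below -/
import Mathlib

section
/- Let G, G', G'', G''' be groups and j : G → G', j' : G' → G'', j'' : G'' → G''' group isomorphisms. The transitive products are associative: for all (α,β) ∈ G''' × G'', (γ,δ) ∈ G'' × G', (μ,ν) ∈ G' × G, one has m_{j'',(j''∘j')}( m_{j'',j'}((α,β),(γ,δ)), (μ,ν) ) = m_{j'',(j'∘j)}( (α,β), m_{j',j}((γ,δ),(μ,ν)) ), and both sides equal the explicit expression ( α · j''(γ) · (j''∘j')(μ), ν · j⁻¹( μ⁻¹ · δ · j'⁻¹(γ⁻¹βγ) · μ ) ). (In m_{j'',(j''∘j')} the first isomorphism governs the upper components and the second governs the lower components, i.e. m_{u,l}((p,q),(r,s)) = (p·u(r), s·l⁻¹(r⁻¹qr)).) -/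
/-!
Both bracketings unfold to the same pair. The upper components agree because `j''` is
multiplicative. For the lower ones, the right bracketing pulls back `γ⁻¹βγ` along the
composite `j' ∘ j` only after conjugating by `j' μ`; since isomorphisms commute with
conjugation this is `j⁻¹(μ⁻¹ · j'⁻¹(γ⁻¹βγ) · μ)`, and the two conjugates by `μ` merge into one.
-/

/-- The transitive product `m_{u,l} : (H''×H') × (H'×H) → H''×H` associated to a
lower fusion map `l : H → H'` and an upper fusion map `u : H' → H''`:
`m_{u,l}((α,β),(γ,δ)) = (α·u(γ), δ·l⁻¹(γ⁻¹βγ))`. -/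
def transMul {H H' H'' : Type*} [Group H] [Group H'] [Group H'']
    (u : H' ≃* H'') (l : H ≃* H') (x : H'' × H') (y : H' × H) : H'' × H :=
  (x.1 * u y.1, y.2 * l.symm (y.1⁻¹ * x.2 * y.1))

section

variable {G G' G'' G''' : Type*} [Group G] [Group G'] [Group G''] [Group G''']

@[simp]
theorem transMul_fst (u : G' ≃* G'') (l : G ≃* G') (x : G'' × G') (y : G' × G) :
    (transMul u l x y).1 = x.1 * u y.1 :=
  rfl

@[simp]
theorem transMul_snd (u : G' ≃* G'') (l : G ≃* G') (x : G'' × G') (y : G' × G) :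
    (transMul u l x y).2 = y.2 * l.symm (y.1⁻¹ * x.2 * y.1) :=
  rfl

theorem MulEquiv.symm_conj (e : G ≃* G') (g : G) (h : G') :
    e.symm ((e g)⁻¹ * h * e g) = g⁻¹ * e.symm h * g := by
  simp

theorem transMul_transMul_left (j : G ≃* G') (j' : G' ≃* G'') (j'' : G'' ≃* G''')
    (x : G''' × G'') (y : G'' × G') (z : G' × G) :
    transMul (j'.trans j'') j (transMul j'' j' x y) z
      = (x.1 * j'' y.1 * (j'.trans j'') z.1,
         z.2 * j.symm (z.1⁻¹ * (y.2 * j'.symm (y.1⁻¹ * x.2 * y.1)) * z.1)) :=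
  rfl

theorem transMul_transMul_right (j : G ≃* G') (j' : G' ≃* G'') (j'' : G'' ≃* G''')
    (x : G''' × G'') (y : G'' × G') (z : G' × G) :
    transMul j'' (j.trans j') x (transMul j' j y z)
      = (x.1 * j'' y.1 * (j'.trans j'') z.1,
         z.2 * j.symm (z.1⁻¹ * (y.2 * j'.symm (y.1⁻¹ * x.2 * y.1)) * z.1)) := by
  have hconj : (j.trans j').symm ((y.1 * j' z.1)⁻¹ * x.2 * (y.1 * j' z.1))
      = j.symm (z.1⁻¹ * j'.symm (y.1⁻¹ * x.2 * y.1) * z.1) := by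
    rw [MulEquiv.symm_trans_apply, ← j'.symm_conj]
    congr 2
    group
  ext
  · simp [mul_assoc]
  · simp only [transMul_snd, transMul_fst, hconj]
    rw [mul_assoc, ← map_mul]
    group

end

/-- Associativity of the transitive products, with both sides equal to the explicit
expression `(α·j''(γ)·(j''∘j')(μ), ν·j⁻¹(μ⁻¹·δ·j'⁻¹(γ⁻¹βγ)·μ))`. -/
theorem transMul_assoc {G G' G'' G''' : Type*}
    [Group G] [Group G'] [Group G''] [Group G''']
    (j : G ≃* G') (j' : G' ≃* G'') (j'' : G'' ≃* G''')
    (α : G''') (β : G'') (γ : G'') (δ : G') (μ : G') (ν : G) :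
    transMul (j'.trans j'') j (transMul j'' j' (α, β) (γ, δ)) (μ, ν)
      = transMul j'' (j.trans j') (α, β) (transMul j' j (γ, δ) (μ, ν)) ∧
    transMul (j'.trans j'') j (transMul j'' j' (α, β) (γ, δ)) (μ, ν)
      = (α * j'' γ * (j'.trans j'') μ,
         ν * j.symm (μ⁻¹ * (δ * j'.symm (γ⁻¹ * β * γ)) * μ)) :=
  ⟨(transMul_transMul_left j j' j'' _ _ _).trans
      (transMul_transMul_right j j' j'' _ _ _).symm,
    transMul_transMul_left j j' j'' _ _ _⟩
end

section
/- Let G, G', G'' be groups and j : G → G', j' : G' → G'' group isomorphisms. For every ω ∈ G''×G, β ∈ G''×G' and α ∈ G'×G, the conjugation compatibility holds: ω · m_{j',j}(β, α) · ω⁻¹ = m_{j',j}( ω₍₁₎ · β , α · (ω₍₂₎)⁻¹ ), where: the products and inverses involving ω are taken in the group G''×G with the (j'∘j)-twisted product; ω₍₁₎ = (π₁₂(ω)) with π₁₂ = id × j : G''×G → G''×G' and the product ω₍₁₎·β is the j'-twisted product on G''×G'; ω₍₂₎ = π₂₃(ω) with π₂₃ = (j')⁻¹ × id : G''×G → G'×G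 and the product α·(ω₍₂₎)⁻¹ is taken in G'×G with the j-twisted product; and m_{j',j} : (G''×G') × (G'×G) → G''×G is the transitive product. -/
/-- The `j`-twisted product on `G' × G`:
`(α,β)*(γ,δ) = (αγ, δ · j⁻¹(γ⁻¹) · β · j⁻¹(γ))`. -/
def twMul {G G' : Type*} [Group G] [Group G'] (j : G ≃* G') (x y : G' × G) : G' × G :=
  (x.1 * y.1, y.2 * j.symm y.1⁻¹ * x.2 * j.symm y.1)

/-- The inverse of an element for the `j`-twisted product on `G' × G`:
`(α,β)⁻¹ = (α⁻¹, j⁻¹(α)·β⁻¹·j⁻¹(α⁻¹))`. -/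
def twInv {G G' : Type*} [Group G] [Group G'] (j : G ≃* G') (x : G' × G) : G' × G :=
  (x.1⁻¹, j.symm x.1 * x.2⁻¹ * j.symm x.1⁻¹)

/-- Conjugation compatibility between the twisted group products and the transitive
product: `ω · m_{j',j}(β, α) · ω⁻¹ = m_{j',j}(ω₍₁₎ · β, α · (ω₍₂₎)⁻¹)`, where
`ω₍₁₎ = (ω.1, j ω.2)`, `ω₍₂₎ = ((j')⁻¹ ω.1, ω.2)`, products and inverses involving
`ω` are taken with the `(j'∘j)`-twisted product on `G''×G`, the product `ω₍₁₎·β` is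
the `j'`-twisted product on `G''×G'`, and `α·(ω₍₂₎)⁻¹` is taken with the `j`-twisted
product on `G'×G`. -/
theorem conj_compat {G G' G'' : Type*} [Group G] [Group G'] [Group G'']
    (j : G ≃* G') (j' : G' ≃* G'')
    (ω : G'' × G) (β : G'' × G') (α : G' × G) :
    twMul (j.trans j') (twMul (j.trans j') ω (transMul j' j β α))
        (twInv (j.trans j') ω)
      = transMul j' j (twMul j' (ω.1, j ω.2) β)
          (twMul j α (twInv j (j'.symm ω.1, ω.2))) := by
  simp only [twMul, twInv, transMul, Prod.ext_iff, MulEquiv.trans_apply,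
    MulEquiv.symm_trans_apply, map_mul, map_inv, MulEquiv.apply_symm_apply,
    MulEquiv.symm_apply_apply, mul_inv_rev, inv_inv]
  constructor <;> group
end
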